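/- arXiv:1808.06285 — 2 statements merged into one kernel-verified Lean document; each statement's English description precedes it below -/
import Mathlib

section
/- Let $q$ and $X$ be indeterminates (or elements of a field with $q \neq 0$, $qX \neq 1$), and let $m, n$ be nonnegative integers. Define $I_1(m,n) = q^{-2m-2n}\big(X^c + (1-q^{-1}) \sum_{i=1}^{m} X^{c+i} q^{i}\big)$ and $I_2(m,n) = q^{-2m-2n}(1-q^{-1}) \sum_{i=1}^{n} X^{c+i}(q^{i}-1) + q^{-2m-2n}(1-q^{-1}) \sum_{i=1}^{n} X^{c+i} - q^{-2m-2n}(1-q^{-1})^2 \sum_{i=1}^{m} \sum_{j=1}^{n} q^{i+j}\big( (1-q^{-1}) \sum_{l=1}^{i+j-1} X^{c+l} + q^{-1} X^{c+i+j-1}\big) + q^{-2m-2n}(1-q^{-1}) \sum_{i=1}^{m} q^{i+n}\big( (1-q^{-1}) \sum_{l=1}^{i+n} X^{c+l} + q^{-1} X^{c+i+n}\big) + q^{-2m-2n}(1-q^{-1}) \sum_{i=1}^{n} q^{i+m}\big( (1-q^{-1}) \sum_{l=1}^{i+m} X^{c+l} + q^{-1} X^{c+i+m}\big) - q^{-m-n}\big(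 (1-q^{-1}) \sum_{l=1}^{m+n+1} X^{c+l} + q^{-1} X^{c+m+n+1}\big)$, where $c$ is a fixed nonnegative integer. Then $I_1(m,n) + I_2(m,n) = q^{-2m-2n} \cdot \frac{1 - (qX)^{m+n+1}}{1 - qX} \cdot X^{c}(1 - X)$. -/
open Finset

/-- The term `I₁(m,n)` in the ramified Whittaker function computation. -/
noncomputable def I1 {K : Type*} [Field K] (q X : K) (c m n : ℕ) : K :=
  q⁻¹ ^ (2 * m + 2 * n) * (X ^ c + (1 - q⁻¹) * ∑ i ∈ Icc 1 m, X ^ (c + i) * q ^ i)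

/-- The term `I₂(m,n)` in the ramified Whittaker function computation. -/
noncomputable def I2 {K : Type*} [Field K] (q X : K) (c m n : ℕ) : K :=
  q⁻¹ ^ (2 * m + 2 * n) * (1 - q⁻¹) * ∑ i ∈ Icc 1 n, X ^ (c + i) * (q ^ i - 1)
  + q⁻¹ ^ (2 * m + 2 * n) * (1 - q⁻¹) * ∑ i ∈ Icc 1 n, X ^ (c + i)
  - q⁻¹ ^ (2 * m + 2 * n) * (1 - q⁻¹) ^ 2 *
      ∑ i ∈ Icc 1 m, ∑ j ∈ Icc 1 n, q ^ (i + j) *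
        ((1 - q⁻¹) * (∑ l ∈ Icc 1 (i + j - 1), X ^ (c + l)) + q⁻¹ * X ^ (c + i + j - 1))
  + q⁻¹ ^ (2 * m + 2 * n) * (1 - q⁻¹) *
      ∑ i ∈ Icc 1 m, q ^ (i + n) *
        ((1 - q⁻¹) * (∑ l ∈ Icc 1 (i + n), X ^ (c + l)) + q⁻¹ * X ^ (c + i + n))
  + q⁻¹ ^ (2 * m + 2 * n) * (1 - q⁻¹) *
      ∑ i ∈ Icc 1 n, q ^ (i + m) *
        ((1 - q⁻¹) * (∑ l ∈ Icc 1 (i + m), X ^ (c + l)) + q⁻¹ * X ^ (c + i + m))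
  - q⁻¹ ^ (m + n) *
      ((1 - q⁻¹) * (∑ l ∈ Icc 1 (m + n + 1), X ^ (c + l)) + q⁻¹ * X ^ (c + m + n + 1))

/-!
Write `u = q⁻¹` and `B(N) = (1-u) ∑_{l=1}^N X^{c+l} + u X^{c+N}` for the bracket recurring in `I₂`,
so that `B(N+1) = B(N) + X^{c+N+1} - u X^{c+N}`. After clearing the factor `q^{-2m-2n}`, raising
`n` by one (or `m` by one when `n = 0`) changes `q^{2m+2n}(I₁ + I₂)` by exactly
`(qX)^{m+n+1} X^c (1-X)`: the new terms of the double sum cancel against the shifted single sums,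
and everything else telescopes through the recursion for `B`. Starting from `X^c (1-X)` at
`m = n = 0`, the scaled sum is therefore the geometric sum `∑_{k ≤ m+n} (qX)^k` times `X^c (1-X)`.
-/

section ScaledWhittakerSum

variable {K : Type*} [CommRing K]

def whittakerBracket (u X : K) (c N : ℕ) : K :=
  (1 - u) * ∑ l ∈ Icc 1 N, X ^ (c + l) + u * X ^ (c + N)

/-- `q ^ (2 * m + 2 * n) * (I₁ + I₂)`, with `u` playing the role of `q⁻¹`. -/
def scaledWhittakerSum (q u X : K) (c m n : ℕ) : K :=
  X ^ c + (1 - u) * ∑ i ∈ Icc 1 m, X ^ (c + i) * q ^ i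
  + (1 - u) * ∑ i ∈ Icc 1 n, X ^ (c + i) * (q ^ i - 1)
  + (1 - u) * ∑ i ∈ Icc 1 n, X ^ (c + i)
  - (1 - u) ^ 2 * ∑ i ∈ Icc 1 m, ∑ j ∈ Icc 1 n, q ^ (i + j) * whittakerBracket u X c (i + j - 1)
  + (1 - u) * ∑ i ∈ Icc 1 m, q ^ (i + n) * whittakerBracket u X c (i + n)
  + (1 - u) * ∑ i ∈ Icc 1 n, q ^ (i + m) * whittakerBracket u X c (i + m)
  - q ^ (m + n) * whittakerBracket u X c (m + n + 1)

theorem whittakerBracket_succ (u X : K) (c N : ℕ) :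
    whittakerBracket u X c (N + 1)
      = whittakerBracket u X c N + X ^ (c + N + 1) - u * X ^ (c + N) := by
  rw [whittakerBracket, whittakerBracket, sum_Icc_succ_top (by omega)]
  ring

theorem sum_pow_mul_whittakerBracket_succ (q u X : K) (huq : q * u = 1) (c m n : ℕ) :
    ∑ i ∈ Icc 1 m, q ^ (i + (n + 1)) * whittakerBracket u X c (i + (n + 1))
      = q * ∑ i ∈ Icc 1 m, q ^ (i + n) * whittakerBracket u X c (i + n)
        + q ^ (m + n + 1) * X ^ (c + m + n + 1) - q ^ (n + 1) * X ^ (c + n + 1) := by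
  induction m with
  | zero => simp
  | succ m ih =>
    rw [sum_Icc_succ_top (by omega), sum_Icc_succ_top (by omega), ih,
      show m + 1 + (n + 1) = m + 1 + n + 1 by omega, whittakerBracket_succ]
    linear_combination (-(q ^ (m + n + 1) * X ^ (c + m + n + 1))) * huq

theorem sum_sum_pow_mul_whittakerBracket_succ (q u X : K) (c m n : ℕ) :
    ∑ i ∈ Icc 1 m, ∑ j ∈ Icc 1 (n + 1), q ^ (i + j) * whittakerBracket u X c (i + j - 1)
      = ∑ i ∈ Icc 1 m, ∑ j ∈ Icc 1 n, q ^ (i + j) * whittakerBracket u X c (i + j - 1)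
        + q * ∑ i ∈ Icc 1 m, q ^ (i + n) * whittakerBracket u X c (i + n) := by
  rw [mul_sum, ← sum_add_distrib]
  refine sum_congr rfl fun i _ => ?_
  rw [sum_Icc_succ_top (by omega), show i + (n + 1) - 1 = i + n by omega,
    ← add_assoc, pow_succ]
  ring

theorem scaledWhittakerSum_succ_right (q u X : K) (huq : q * u = 1) (c m n : ℕ) :
    scaledWhittakerSum q u X c m (n + 1)
      = scaledWhittakerSum q u X c m n + (q * X) ^ (m + n + 1) * (X ^ c * (1 - X)) := by
  simp only [scaledWhittakerSum]
  rw [sum_Icc_succ_top (by omega : 1 ≤ n + 1), sum_Icc_succ_top (by omega : 1 ≤ n + 1),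
    sum_Icc_succ_top (by omega : 1 ≤ n + 1), sum_sum_pow_mul_whittakerBracket_succ,
    sum_pow_mul_whittakerBracket_succ q u X huq, ← add_assoc m n 1, whittakerBracket_succ,
    show n + 1 + m = m + n + 1 by omega]
  linear_combination ((1 - u) * ∑ i ∈ Icc 1 m, q ^ (i + n) * whittakerBracket u X c (i + n)
    - q ^ (m + n) * whittakerBracket u X c (m + n + 1)) * huq

theorem scaledWhittakerSum_succ_zero (q u X : K) (huq : q * u = 1) (c m : ℕ) :
    scaledWhittakerSum q u X c (m + 1) 0
      = scaledWhittakerSum q u X c m 0 + (q * X) ^ (m + 1) * (X ^ c * (1 - X)) := by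
  simp only [scaledWhittakerSum, Icc_eq_empty_of_lt zero_lt_one, sum_empty, sum_const_zero,
    add_zero, mul_zero, sub_zero]
  rw [sum_Icc_succ_top (by omega), sum_Icc_succ_top (by omega),
    whittakerBracket_succ u X c (m + 1)]
  linear_combination (-(q ^ m * whittakerBracket u X c (m + 1))) * huq

theorem scaledWhittakerSum_zero_zero (q u X : K) (c : ℕ) :
    scaledWhittakerSum q u X c 0 0 = X ^ c * (1 - X) := by
  simp [scaledWhittakerSum, whittakerBracket]
  ring

theorem scaledWhittakerSum_eq_geom_sum (q u X : K) (huq : q * u = 1) (c m n : ℕ) :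
    scaledWhittakerSum q u X c m n
      = (∑ k ∈ range (m + n + 1), (q * X) ^ k) * (X ^ c * (1 - X)) := by
  induction n with
  | zero =>
    induction m with
    | zero => simp [scaledWhittakerSum_zero_zero]
    | succ m ih => rw [scaledWhittakerSum_succ_zero q u X huq, ih, sum_range_succ _ (m + 1)]; ring
  | succ n ih =>
    rw [scaledWhittakerSum_succ_right q u X huq, ih, ← add_assoc m n 1,
      sum_range_succ _ (m + n + 1)]
    ring

end ScaledWhittakerSum

theorem I1_add_I2_eq_scaledWhittakerSum {K : Type*} [Field K] (q X : K) (hq : q ≠ 0)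
    (c m n : ℕ) :
    I1 q X c m n + I2 q X c m n
      = q⁻¹ ^ (2 * m + 2 * n) * scaledWhittakerSum q q⁻¹ X c m n := by
  have hdouble : ∑ i ∈ Icc 1 m, ∑ j ∈ Icc 1 n, q ^ (i + j) *
        ((1 - q⁻¹) * ∑ l ∈ Icc 1 (i + j - 1), X ^ (c + l) + q⁻¹ * X ^ (c + i + j - 1))
      = ∑ i ∈ Icc 1 m, ∑ j ∈ Icc 1 n, q ^ (i + j) * whittakerBracket q⁻¹ X c (i + j - 1) := by
    refine sum_congr rfl fun i hi => sum_congr rfl fun j _ => ?_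
    rw [show c + i + j - 1 = c + (i + j - 1) by have := (mem_Icc.mp hi).1; omega]
    rfl
  have hpow : q⁻¹ ^ (2 * m + 2 * n) * q ^ (m + n) = q⁻¹ ^ (m + n) := by
    rw [show 2 * m + 2 * n = (m + n) + (m + n) by ring, pow_add, mul_assoc, ← mul_pow,
      inv_mul_cancel₀ hq, one_pow, mul_one]
  simp only [I1, I2, scaledWhittakerSum, whittakerBracket, add_assoc c] at hdouble ⊢
  rw [hdouble]
  linear_combination
    ((1 - q⁻¹) * ∑ l ∈ Icc 1 (m + n + 1), X ^ (c + l) + q⁻¹ * X ^ (c + (m + n + 1))) * hpow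

/-- Closed form of the ramified `GL₃` Whittaker function at torus elements:
`I₁(m,n) + I₂(m,n) = q^{-2m-2n} (1-(qX)^{m+n+1})/(1-qX) ⋅ X^c (1-X)`. -/
theorem stmt2 {K : Type*} [Field K] (q X : K) (hq : q ≠ 0) (hqX : q * X ≠ 1)
    (c m n : ℕ) :
    I1 q X c m n + I2 q X c m n
      = q⁻¹ ^ (2 * m + 2 * n) * ((1 - (q * X) ^ (m + n + 1)) / (1 - q * X))
          * (X ^ c * (1 - X)) := by
  have hgeom : ∑ k ∈ range (m + n + 1), (q * X) ^ k
      = (1 - (q * X) ^ (m + n + 1)) / (1 - q * X) := by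
    rw [geom_sum_eq hqX, ← neg_div_neg_eq, neg_sub, neg_sub]
  rw [I1_add_I2_eq_scaledWhittakerSum q X hq,
    scaledWhittakerSum_eq_geom_sum q q⁻¹ X (mul_inv_cancel₀ hq), hgeom, mul_assoc]
end

section
/- Let $F$ be a nonarchimedean local field with ring of integers $\mathfrak{o}$ and maximal ideal $\mathfrak{p}$, let $n \ge 1$, let $B_3 \subset \mathrm{GL}_3(F)$ be the subgroup of upper triangular invertible matrices, and let $K_n$ be the group of matrices $g \in \mathrm{GL}_3(F)$ such that both $g$ and $g^{-1}$ have block shape $\begin{pmatrix} \mathfrak{o} & \mathfrak{o} & \mathfrak{p}^{-n}\\ \mathfrak{p}^n & 1+\mathfrak{p}^n & \mathfrak{o} \\ \mathfrak{p}^n & \mathfrak{p}^n & \mathfrak{o} \end{pmatrix}$. If $x \in F$ and the lower unitriangular matrix $\hat{\mathfrak{u}}(x,0,0)$ (with $x$ in position $(2,1)$) lies in $B_3 K_n$, then $x \in \mathfrak{p}^n$. Similarly, if $\hat{\mathfrak{u}}(0,y,0)$ (with $y$ in position $(3,2)$) lies in $B_3 K_n$, then $y \in \mathfrak{p}^n$.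 -/
open Matrix

/-- `x ∈ 𝔭^k` (for `k ∈ ℤ`, so negative powers are fractional ideals), where `𝔭 = ϖ𝔬`. -/
def pmem {F : Type*} [Field F] (O : Subring F) (ϖ : F) (k : ℤ) (x : F) : Prop :=
  ∃ y ∈ O, x = ϖ ^ k * y

/-- The congruence shape `(𝔬, 𝔬, 𝔭^{-n}; 𝔭^n, 1+𝔭^n, 𝔬; 𝔭^n, 𝔭^n, 𝔬)`. -/
def Kshape {F : Type*} [Field F] (O : Subring F) (ϖ : F) (n : ℕ)
    (g : Matrix (Fin 3) (Fin 3) F) : Prop :=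
  g 0 0 ∈ O ∧ g 0 1 ∈ O ∧ pmem O ϖ (-(n : ℤ)) (g 0 2) ∧
  pmem O ϖ (n : ℤ) (g 1 0) ∧ pmem O ϖ (n : ℤ) (g 1 1 - 1) ∧ g 1 2 ∈ O ∧
  pmem O ϖ (n : ℤ) (g 2 0) ∧ pmem O ϖ (n : ℤ) (g 2 1) ∧ g 2 2 ∈ O

/-- The congruence subgroup `K_n`: invertible matrices `g` such that `g` and `g⁻¹` both have
the prescribed congruence shape. -/
def Kn {F : Type*} [Field F] (O : Subring F) (ϖ : F) (n : ℕ) :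
    Set (Matrix (Fin 3) (Fin 3) F) :=
  {g | IsUnit g.det ∧ Kshape O ϖ n g ∧ Kshape O ϖ n g⁻¹}

/-- The upper triangular Borel subgroup `B₃` of `GL₃(F)`. -/
def B3 (F : Type*) [Field F] : Set (Matrix (Fin 3) (Fin 3) F) :=
  {b | IsUnit b.det ∧ b 1 0 = 0 ∧ b 2 0 = 0 ∧ b 2 1 = 0}

/-
Comparing rows in `u = b k` with `b` upper triangular, the last row of `k` is `b₂₂⁻¹` times
that of `u`, and the subdiagonal entry of `u` is `k₁₀ / k₁₁` (resp. `k₂₁ / k₂₂`). The numerator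
lies in `𝔭ⁿ` by the shape of `K_n`, and the denominator is a unit of `𝔬` because it divides an
element of `1 + 𝔭ⁿ`: `k₁₁` itself, resp. `k₂₂ (k⁻¹)₂₂ = 1 - k₂₁ (k⁻¹)₁₂`, read off from
`(k k⁻¹)₂₂ = 1` once `k₂₀ = 0`.
-/

section Valuation

variable {F : Type*} [Field F] {O : Subring F} {ϖ : F}

theorem pmem.mul_right {k : ℤ} {x c : F} (hx : pmem O ϖ k x) (hc : c ∈ O) :
    pmem O ϖ k (x * c) := by
  obtain ⟨y, hy, rfl⟩ := hx
  exact ⟨y * c, mul_mem hy hc, by ring⟩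

theorem pmem.mem {n : ℕ} {x : F} (hϖO : ϖ ∈ O) (hx : pmem O ϖ n x) : x ∈ O := by
  obtain ⟨y, hy, rfl⟩ := hx
  rw [zpow_natCast]
  exact mul_mem (pow_mem hϖO n) hy

/-- Otherwise `a ∈ 𝔭`, hence `1 ∈ a b + 𝔭ⁿ ⊆ 𝔭`. -/
theorem inv_mem_of_pmem_mul_sub_one {n : ℕ} (hn : 1 ≤ n) (hϖO : ϖ ∈ O) (hϖnu : ϖ⁻¹ ∉ O)
    (hmax : ∀ x ∈ O, x⁻¹ ∉ O → ∃ y ∈ O, x = ϖ * y) {a b : F} (ha : a ∈ O) (hb : b ∈ O)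
    (hab : pmem O ϖ n (a * b - 1)) : a⁻¹ ∈ O := by
  by_contra ha'
  obtain ⟨t, ht, rfl⟩ := hmax a ha ha'
  obtain ⟨y, hy, hty⟩ := hab
  obtain ⟨m, rfl⟩ := Nat.exists_eq_add_of_le' hn
  rw [zpow_natCast] at hty
  have hunit : ϖ * (t * b - ϖ ^ m * y) = 1 := by linear_combination hty
  exact hϖnu (inv_eq_of_mul_eq_one_right hunit ▸
    sub_mem (mul_mem ht hb) (mul_mem (pow_mem hϖO m) hy))

end Valuation

namespace B3

variable {F : Type*} [Field F] {b : Matrix (Fin 3) (Fin 3) F}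

theorem two_two_ne_zero (hb : b ∈ B3 F) : b 2 2 ≠ 0 := by
  obtain ⟨hdet, h10, h20, h21⟩ := hb
  intro h22
  apply hdet.ne_zero
  rw [det_fin_three, h10, h20, h21, h22]
  ring

theorem mul_apply_two (hb : b ∈ B3 F) (k : Matrix (Fin 3) (Fin 3) F) (j : Fin 3) :
    (b * k) 2 j = b 2 2 * k 2 j := by
  simp [mul_apply, Fin.sum_univ_three, hb.2.2.1, hb.2.2.2]

theorem mul_apply_one (hb : b ∈ B3 F) (k : Matrix (Fin 3) (Fin 3) F) (j : Fin 3) :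
    (b * k) 1 j = b 1 1 * k 1 j + b 1 2 * k 2 j := by
  simp [mul_apply, Fin.sum_univ_three, hb.2.1]

theorem eq_zero_of_mul_apply_two_eq_zero (hb : b ∈ B3 F) {k : Matrix (Fin 3) (Fin 3) F}
    {j : Fin 3} (h : (b * k) 2 j = 0) : k 2 j = 0 := by
  rw [mul_apply_two hb] at h
  exact (mul_eq_zero.mp h).resolve_left (two_two_ne_zero hb)

end B3

section Support

variable {F : Type*} [Field F] {O : Subring F} {ϖ : F} {n : ℕ} (hn : 1 ≤ n) (hϖO : ϖ ∈ O)
  (hϖnu : ϖ⁻¹ ∉ O) (hmax : ∀ x ∈ O, x⁻¹ ∉ O → ∃ y ∈ O, x = ϖ * y)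
include hn hϖO hϖnu hmax

theorem pmem_of_lowerUnipotent₁₀_mem_B3_mul_Kn {x : F} {b k : Matrix (Fin 3) (Fin 3) F}
    (hb : b ∈ B3 F) (hk : k ∈ Kn O ϖ n) (heq : !![(1 : F), 0, 0; x, 1, 0; 0, 0, 1] = b * k) :
    pmem O ϖ n x := by
  have e := congr_fun₂ heq
  obtain ⟨-, -, -, hk10, hk11, -, -, -, -⟩ := hk.2.1
  have hk20 : k 2 0 = 0 := B3.eq_zero_of_mul_apply_two_eq_zero hb (by simpa using (e 2 0).symm)
  have hk21 : k 2 1 = 0 := B3.eq_zero_of_mul_apply_two_eq_zero hb (by simpa using (e 2 1).symm)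
  have hb11 : b 1 1 * k 1 1 = 1 := by simpa [B3.mul_apply_one hb, hk21] using (e 1 1).symm
  have hx : x = k 1 0 * (k 1 1)⁻¹ := by
    simpa [B3.mul_apply_one hb, hk20, eq_inv_of_mul_eq_one_left hb11, mul_comm] using e 1 0
  have hk11O : k 1 1 ∈ O := by simpa using add_mem (hk11.mem hϖO) (one_mem O)
  rw [hx]
  exact hk10.mul_right
    (inv_mem_of_pmem_mul_sub_one hn hϖO hϖnu hmax hk11O (one_mem O) (by simpa using hk11))

theorem pmem_of_lowerUnipotent₂₁_mem_B3_mul_Kn {y : F} {b k : Matrix (Fin 3) (Fin 3) F}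
    (hb : b ∈ B3 F) (hk : k ∈ Kn O ϖ n) (heq : !![(1 : F), 0, 0; 0, 1, 0; 0, y, 1] = b * k) :
    pmem O ϖ n y := by
  have e := congr_fun₂ heq
  obtain ⟨hdet, ⟨-, -, -, -, -, -, -, hk21, hk22⟩, ⟨-, -, -, -, -, hk'12, -, -, hk'22⟩⟩ := hk
  have hk20 : k 2 0 = 0 := B3.eq_zero_of_mul_apply_two_eq_zero hb (by simpa using (e 2 0).symm)
  have hb22 : b 2 2 * k 2 2 = 1 := by simpa [B3.mul_apply_two hb] using (e 2 2).symm
  have hy : y = k 2 1 * (k 2 2)⁻¹ := by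
    simpa [B3.mul_apply_two hb, eq_inv_of_mul_eq_one_left hb22, mul_comm] using e 2 1
  have hkk : k 2 2 * k⁻¹ 2 2 - 1 = k 2 1 * -k⁻¹ 1 2 := by
    have := congr_fun₂ (mul_nonsing_inv k hdet) 2 2
    simp only [mul_apply, Fin.sum_univ_three, hk20, one_apply_eq] at this
    linear_combination this
  rw [hy]
  exact hk21.mul_right (inv_mem_of_pmem_mul_sub_one hn hϖO hϖnu hmax hk22 hk'22
    (hkk ▸ hk21.mul_right (neg_mem hk'12)))

end Support

theorem stmt7_general {F : Type*} [Field F] (O : Subring F) (ϖ : F) (n : ℕ) (hn : 1 ≤ n)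
    (hϖO : ϖ ∈ O) (hϖnu : ϖ⁻¹ ∉ O)
    (hmax : ∀ x ∈ O, x⁻¹ ∉ O → ∃ y ∈ O, x = ϖ * y) :
    (∀ x : F,
      (∃ b ∈ B3 F, ∃ k ∈ Kn O ϖ n, !![(1 : F), 0, 0; x, 1, 0; 0, 0, 1] = b * k) →
        pmem O ϖ (n : ℤ) x) ∧
    (∀ y : F,
      (∃ b ∈ B3 F, ∃ k ∈ Kn O ϖ n, !![(1 : F), 0, 0; 0, 1, 0; 0, y, 1] = b * k) →
        pmem O ϖ (n : ℤ) y) :=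
  ⟨fun _ ⟨_, hb, _, hk, heq⟩ =>
      pmem_of_lowerUnipotent₁₀_mem_B3_mul_Kn hn hϖO hϖnu hmax hb hk heq,
    fun _ ⟨_, hb, _, hk, heq⟩ =>
      pmem_of_lowerUnipotent₂₁_mem_B3_mul_Kn hn hϖO hϖnu hmax hb hk heq⟩

/-- If a lower unitriangular matrix `û(x,0,0)` (resp. `û(0,y,0)`) lies in `B₃ K_n`, then
`x ∈ 𝔭^n` (resp. `y ∈ 𝔭^n`). -/
theorem stmt7 {F : Type*} [Field F] (O : Subring F) (ϖ : F) (n : ℕ) (hn : 1 ≤ n)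
    (hϖO : ϖ ∈ O) (hϖ0 : ϖ ≠ 0) (hϖnu : ϖ⁻¹ ∉ O)
    (hval : ∀ x : F, x ∈ O ∨ x⁻¹ ∈ O)
    (hmax : ∀ x ∈ O, x⁻¹ ∉ O → ∃ y ∈ O, x = ϖ * y) :
    (∀ x : F,
      (∃ b ∈ B3 F, ∃ k ∈ Kn O ϖ n, !![(1 : F), 0, 0; x, 1, 0; 0, 0, 1] = b * k) →
        pmem O ϖ (n : ℤ) x) ∧
    (∀ y : F,
      (∃ b ∈ B3 F, ∃ k ∈ Kn O ϖ n, !![(1 : F), 0, 0; 0, 1, 0; 0, y, 1] = b * k) →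
        pmem O ϖ (n : ℤ) y) :=
  stmt7_general O ϖ n hn hϖO hϖnu hmax
end
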